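/- arXiv:2007.00735 — 2 statements merged into one kernel-verified Lean document; each statement's English description precedes it below -/
import Mathlib

section
/- Fix L, N ∈ ℕ with N < L. Let x, y ∈ 𝒱_L^N, let k = d_L^N(x,y), and let u be a shortest path from x to y with particle labels (ũ^(l))_{l≤k} tracking individual particles along the path. Then for every j ∈ {1,...,N}, the total distance traveled by particle j, L_j^u := Σ_{l=1}^k d_L(ũ_j^(l-1), ũ_j^(l)), satisfies L_j^u = d_L(ũ_j^(0), ũ_j^(k)) ≤ L/2, and ũ_j^(k) ∈ {(x_j + L_j^u) mod L, (x_j − L_j^u) mod L}. -/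
open Finset
open scoped Classical
open Fin.NatCast

noncomputable section

/-- Distance on the cycle `ℤ/L`. -/
def cycDist {L : ℕ} (a b : Fin L) : ℕ := min (a - b).val (b - a).val

/-- Hard-core configuration graph: an edge moves one particle to a free neighbouring site. -/
def hcGraph (L : ℕ) [NeZero L] : SimpleGraph (Finset (Fin L)) where
  Adj x y := x.card = y.card ∧ ∃ j : Fin L, symmDiff x y = {j, j + ((1 : ℕ) : Fin L)}
  symm := by
    constructor
    rintro x y ⟨h1, j, h2⟩
    refine ⟨h1.symm, j, ?_⟩
    rw [symmDiff_comm]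
    exact h2
  loopless := by
    constructor
    rintro x ⟨-, j, h2⟩
    have hj : j ∈ symmDiff x x := by rw [h2]; simp
    rw [symmDiff_self] at hj
    simp at hj

/-- Graph distance `d_L^N` on the hard-core configuration graph. -/
def dN (L : ℕ) [NeZero L] (x y : Finset (Fin L)) : ℕ := (hcGraph L).dist x y

/-- The droplet (cluster of `N` consecutive sites) centred at `m`. -/
def droplet (L N : ℕ) [NeZero L] (m : Fin L) : Finset (Fin L) :=
  (Finset.range N).image fun i => m - (((N - 1) / 2 : ℕ) : Fin L) + (i : Fin L)

def isDroplet (L N : ℕ) [NeZero L] (c : Finset (Fin L)) : Prop := ∃ m : Fin L, c = droplet L N m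

/-- Distance to the set of droplet configurations. -/
def distDrop (L N : ℕ) [NeZero L] (x : Finset (Fin L)) : ℕ :=
  sInf (Set.range fun m : Fin L => dN L x (droplet L N m))

/-- Centres of droplets closest to `x`. -/
def WL (L N : ℕ) [NeZero L] (x : Finset (Fin L)) : Set (Fin L) :=
  {m : Fin L | dN L x (droplet L N m) = distDrop L N x}

/-- A path of length `k` from `x` to `y` in the configuration graph. -/
def IsPathN (L : ℕ) [NeZero L] (u : ℕ → Finset (Fin L)) (k : ℕ) (x y : Finset (Fin L)) : Prop :=
  u 0 = x ∧ u k = y ∧ ∀ l < k, (hcGraph L).Adj (u l) (u (l + 1))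

/-- The particle-tracking of a path: the labelled positions `ũ`. -/
def IsTracking (L N : ℕ) [NeZero L] (u : ℕ → Finset (Fin L)) (k : ℕ) (ut : ℕ → Fin N → Fin L) : Prop :=
  StrictMono (ut 0) ∧
  (∀ l ≤ k, u l = Finset.image (ut l) Finset.univ) ∧
  ∀ l < k, ∀ j : Fin N, (ut l j ∈ u (l + 1) → ut (l + 1) j = ut l j) ∧
    (ut l j ∉ u (l + 1) → ut (l + 1) j ∈ u (l + 1) \ u l)

/-- `L_j^u` : distance travelled by particle `j` along the tracked path. -/
def travel {L N : ℕ} (ut : ℕ → Fin N → Fin L) (k : ℕ) (j : Fin N) : ℕ :=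
  ∑ l ∈ Finset.range k, cycDist (ut l j) (ut (l + 1) j)

/-- `I_-^u` : particles moving counter-clockwise. -/
def Iminus {L N : ℕ} [NeZero L] (ut : ℕ → Fin N → Fin L) (k : ℕ) (j : Fin N) : Prop :=
  travel ut k j ≠ 0 ∧ ∃ l ≤ k, ut l j = ut 0 j - ((1 : ℕ) : Fin L)

/-- `I_+^u` : particles moving clockwise. -/
def Iplus {L N : ℕ} [NeZero L] (ut : ℕ → Fin N → Fin L) (k : ℕ) (j : Fin N) : Prop :=
  travel ut k j ≠ 0 ∧ ∃ l ≤ k, ut l j = ut 0 j + ((1 : ℕ) : Fin L)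

/-- `I_0^u` : particles that do not move. -/
def I0 {L N : ℕ} (ut : ℕ → Fin N → Fin L) (k : ℕ) (j : Fin N) : Prop := travel ut k j = 0

/-- The midpoint `M = ⌊(L-1)/2⌋` of the cycle. -/
def midL (L : ℕ) [NeZero L] : Fin L := (((L - 1) / 2 : ℕ) : Fin L)

/-- The sector of size `θ` around `m`, as a set. -/
def sector (L : ℕ) [NeZero L] (m : Fin L) (θ : ℝ) : Set (Fin L) :=
  {k : Fin L | (cycDist k m : ℝ) < θ * L}

/-- The sector of size `θ` around `m`, as a finset. -/
def secF (L : ℕ) [NeZero L] (m : Fin L) (θ : ℝ) : Finset (Fin L) :=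
  Finset.univ.filter fun k => (cycDist k m : ℝ) < θ * L

/-!
Encode a path by its flow `F : Fin L → ℤ`, the net number of particles crossing each edge
`e → e + 1`. Conversely every integer flow from `x` to `y` is realised by a walk of length
`∑ |F e|`: some particle sits on an edge of positive flow in front of a free site, and moving
it lowers the cost by one. Flows from `x` to `y` differ by constants, so the flow of a geodesic
is optimal: no edge is crossed in both directions, and comparing with `F ∓ 1` shows that at
most `L / 2` edges carry positive and at most `L / 2` negative flow. A particle therefore never
turns back (it would recross an edge), and the edges it sweeps all carry flow of one sign, so
it moves monotonically by at most `L / 2` sites.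
-/

theorem Int.sum_pos_of_natAbs_sum_eq {ι : Type*} {s : Finset ι} {f : ι → ℤ} {a : ι}
    (h : (∑ i ∈ s, f i).natAbs = ∑ i ∈ s, (f i).natAbs) (ha : a ∈ s) (hfa : 0 < f a) :
    0 < ∑ i ∈ s, f i := by
  have habs : |∑ i ∈ s, f i| = ∑ i ∈ s, |f i| := by
    simpa only [Int.natCast_natAbs, Nat.cast_sum] using congrArg (Nat.cast : ℕ → ℤ) h
  by_contra! hle
  have hzero : ∑ i ∈ s, (|f i| + f i) = 0 := by
    rw [sum_add_distrib, ← habs, abs_of_nonpos hle, neg_add_cancel]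
  have := single_le_sum (f := fun i => |f i| + f i)
    (fun i _ => by cases abs_cases (f i) <;> linarith) ha
  rw [hzero, abs_of_pos hfa] at this
  linarith

theorem Int.sum_neg_of_natAbs_sum_eq {ι : Type*} {s : Finset ι} {f : ι → ℤ} {a : ι}
    (h : (∑ i ∈ s, f i).natAbs = ∑ i ∈ s, (f i).natAbs) (ha : a ∈ s) (hfa : f a < 0) :
    ∑ i ∈ s, f i < 0 := by
  simpa using Int.sum_pos_of_natAbs_sum_eq (f := fun i => -f i) (by simpa using h) ha
    (by simpa using hfa)

theorem sum_natAbs_sub_single {ι : Type*} [Fintype ι] [DecidableEq ι] {F : ι → ℤ} {e : ι}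
    (he : 0 < F e) :
    ∑ a, ((F - Pi.single e 1 : ι → ℤ) a).natAbs + 1 = ∑ a, (F a).natAbs := by
  simp only [Pi.sub_apply]
  rw [← add_sum_erase _ _ (mem_univ e), ← add_sum_erase _ _ (mem_univ e),
    sum_congr rfl fun a ha => by rw [Pi.single_eq_of_ne (ne_of_mem_erase ha), sub_zero]]
  simp only [Pi.single_eq_same]
  omega

theorem cycDist_comm {L : ℕ} (a b : Fin L) : cycDist a b = cycDist b a := min_comm _ _

open Fin.CommRing

section

variable {L : ℕ} [NeZero L]

theorem Fin.induction_add_one {P : Fin L → Prop} (a : Fin L) (ha : P a)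
    (hstep : ∀ e, P e → P (e + 1)) (e : Fin L) : P e := by
  have key : ∀ n : ℕ, P (a + n) := by
    intro n
    induction n with
    | zero => simpa using ha
    | succ n ih => simpa [add_assoc] using hstep _ ih
  simpa using key (e - a).val

theorem Fin.induction_sub_one {P : Fin L → Prop} (a : Fin L) (ha : P a)
    (hstep : ∀ e, P e → P (e - 1)) (e : Fin L) : P e := by
  simpa using Fin.induction_add_one (P := fun e => P (-e)) (-a) (by simpa using ha)
    (fun e he => by rw [neg_add']; exact hstep _ he) (-e)

theorem le_card_filter_of_forall_add_natCast {P : Fin L → Prop} [DecidablePred P] (a : Fin L)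
    {m : ℕ} (hm : m ≤ L) (h : ∀ n < m, P (a + n)) : m ≤ #{e | P e} := by
  calc m = #((range m).image fun n : ℕ => a + n) := by
        rw [card_image_of_injOn, card_range]
        intro n₁ hn₁ n₂ hn₂ heq
        have := congrArg Fin.val (add_left_cancel heq)
        simp only [coe_range, Set.mem_Iio] at hn₁ hn₂
        rwa [Fin.val_natCast, Fin.val_natCast, Nat.mod_eq_of_lt (by omega),
          Nat.mod_eq_of_lt (by omega)] at this
    _ ≤ #{e | P e} := card_le_card fun e he => by
        obtain ⟨n, hn, rfl⟩ := mem_image.1 he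
        exact mem_filter.2 ⟨mem_univ _, h n (mem_range.1 hn)⟩

theorem cycDist_add_natCast (a : Fin L) {m : ℕ} (hm : 2 * m ≤ L) :
    cycDist a (a + m) = m := by
  have hL := NeZero.pos L
  have hmL : m < L := by omega
  rw [cycDist, show a - (a + m) = -(m : Fin L) by ring, add_sub_cancel_left, Fin.val_neg',
    Fin.val_natCast, Nat.mod_eq_of_lt hmL]
  rcases Nat.eq_zero_or_pos m with rfl | hm0
  · simp
  · rw [Nat.mod_eq_of_lt (by omega)]; omega

theorem cycDist_add_intCast (a : Fin L) {D : ℤ} (hD : 2 * D.natAbs ≤ L) :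
    cycDist a (a + D) = D.natAbs ∧ (a + D = a + D.natAbs ∨ a + D = a - D.natAbs) := by
  obtain ⟨m, rfl | rfl⟩ := Int.eq_nat_or_neg D
  · simp only [Int.natAbs_natCast, Int.cast_natCast] at hD ⊢
    exact ⟨cycDist_add_natCast a hD, .inl trivial⟩
  · simp only [Int.natAbs_neg, Int.natAbs_natCast, Int.cast_neg, Int.cast_natCast,
      ← sub_eq_add_neg] at hD ⊢
    refine ⟨?_, .inr trivial⟩
    simpa [cycDist_comm] using cycDist_add_natCast (a - (m : Fin L)) hD

/-- `D` is the displacement of the walk lifted to `ℤ`; the edges it has swept carry flow of the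
sign of `D`, which is what forbids turning back. -/
theorem exists_displacement {p : ℕ → Fin L} {G : Fin L → ℤ} {k : ℕ} (hL : 2 ≤ L)
    (hstep : ∀ l < k, p (l + 1) = p l ∨ (p (l + 1) = p l + 1 ∧ 0 < G (p l)) ∨
      (p l = p (l + 1) + 1 ∧ G (p (l + 1)) < 0)) :
    ∃ D : ℤ, ∑ l ∈ range k, cycDist (p l) (p (l + 1)) = D.natAbs ∧ p k = p 0 + D ∧
      (∀ n : ℤ, 0 ≤ n → n < D → 0 < G (p 0 + n)) ∧
      (∀ n : ℤ, D ≤ n → n < 0 → G (p 0 + n) < 0) := by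
  induction k with
  | zero => exact ⟨0, by simp, by simp, fun n _ _ => by omega, fun n _ _ => by omega⟩
  | succ k ih =>
    obtain ⟨D, hsum, hpk, hpos, hneg⟩ := ih fun l hl => hstep l (by omega)
    have hone : ∀ a : Fin L, cycDist a (a + 1) = 1 := fun a => by
      simpa using cycDist_add_natCast a (m := 1) hL
    rw [sum_range_succ, hsum]
    rcases hstep k (by omega) with hstay | ⟨hcw, hG⟩ | ⟨hccw, hG⟩
    · exact ⟨D, by simp [hstay, cycDist], by rw [hstay, hpk], hpos, hneg⟩
    · have hD : 0 ≤ D := by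
        by_contra! hD
        have := hneg D le_rfl hD
        rw [← hpk] at this
        omega
      refine ⟨D + 1, by rw [hcw, hone]; omega, by rw [hcw, hpk]; push_cast; ring,
        fun n h0 hn => ?_, fun n _ _ => by omega⟩
      rcases (show n < D ∨ n = D by omega) with hn | rfl
      · exact hpos n h0 hn
      · rwa [← hpk]
    · have hpk' : p (k + 1) = p 0 + ((D - 1 : ℤ) : Fin L) := by
        rw [eq_sub_of_add_eq hccw.symm, hpk]; push_cast; ring
      have hD : D ≤ 0 := by
        by_contra! hD
        have := hpos (D - 1) (by omega) (by omega)
        rw [← hpk'] at this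
        omega
      refine ⟨D - 1, by rw [hccw, cycDist_comm, hone]; omega, hpk',
        fun n _ _ => by omega, fun n hn h0 => ?_⟩
      rcases (show D ≤ n ∨ n = D - 1 by omega) with hn | rfl
      · exact hneg n hn h0
      · rwa [← hpk']

theorem two_mul_natAbs_le_of_sweep {G : Fin L → ℤ} {a : Fin L} {D : ℤ}
    (hpos : 2 * #{e | 0 < G e} ≤ L) (hneg : 2 * #{e | G e < 0} ≤ L)
    (hposD : ∀ n : ℤ, 0 ≤ n → n < D → 0 < G (a + n))
    (hnegD : ∀ n : ℤ, D ≤ n → n < 0 → G (a + n) < 0) :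
    2 * D.natAbs ≤ L := by
  by_contra! hlong
  have hm : L / 2 + 1 ≤ L := by have := NeZero.pos L; omega
  rcases le_or_gt 0 D with hD | hD
  · have := le_card_filter_of_forall_add_natCast (P := fun e => 0 < G e) a hm fun n hn => by
      simpa using hposD n (by omega) (by omega)
    omega
  · have := le_card_filter_of_forall_add_natCast (P := fun e => G e < 0) (a + D) hm fun n hn => by
      simpa [add_assoc] using hnegD (D + n) (by omega) (by omega)
    omega

def IsMove (x y : Finset (Fin L)) (s t : Fin L) : Prop :=
  s ∈ x ∧ t ∉ x ∧ (t = s + 1 ∨ s = t + 1) ∧ y = insert t (x.erase s)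

theorem hcGraph_adj_iff {x y : Finset (Fin L)} :
    (hcGraph L).Adj x y ↔ ∃ s t, IsMove x y s t := by
  constructor
  · rintro ⟨hcard, j, hj⟩
    rw [Nat.cast_one] at hj
    have hsd : (x \ y).card = (y \ x).card := card_sdiff_comm hcard
    have hunion : x \ y ∪ y \ x = {j, j + 1} := hj
    have hjj : j ≠ j + 1 := by
      intro h
      have := congrArg Finset.card hunion
      rw [card_union_of_disjoint disjoint_sdiff_sdiff, ← h, pair_eq_singleton,
        card_singleton] at this
      omega
    have hone : (x \ y).card = 1 := by
      have := congrArg Finset.card hunion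
      rw [card_union_of_disjoint disjoint_sdiff_sdiff, card_pair hjj] at this
      omega
    obtain ⟨s, hs⟩ := card_eq_one.1 hone
    obtain ⟨t, ht⟩ := card_eq_one.1 (hsd ▸ hone)
    have hsx : s ∈ x ∧ s ∉ y := mem_sdiff.1 (hs ▸ mem_singleton_self s)
    have hty : t ∈ y ∧ t ∉ x := mem_sdiff.1 (ht ▸ mem_singleton_self t)
    rw [hs, ht] at hunion
    have hst : s ≠ t := fun h => hty.2 (h ▸ hsx.1)
    refine ⟨s, t, hsx.1, hty.2, ?_, ?_⟩
    · have hs' : s ∈ ({j, j + 1} : Finset (Fin L)) := hunion ▸ by simp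
      have ht' : t ∈ ({j, j + 1} : Finset (Fin L)) := hunion ▸ by simp
      simp only [mem_insert, mem_singleton] at hs' ht'
      rcases hs' with rfl | rfl <;> rcases ht' with rfl | rfl <;> simp_all
    · ext p
      have hp := congrArg (p ∈ ·) hs
      have hq := congrArg (p ∈ ·) ht
      simp only [mem_sdiff, mem_singleton, eq_iff_iff] at hp hq
      simp only [mem_insert, mem_erase]
      tauto
  · rintro ⟨s, t, hs, ht, hdir, rfl⟩
    have hst : s ≠ t := fun h => ht (h ▸ hs)
    have hpair : symmDiff x (insert t (x.erase s)) = {s, t} := by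
      ext p
      simp only [mem_symmDiff, mem_insert, mem_erase, mem_singleton]
      constructor
      · tauto
      · rintro (rfl | rfl) <;> tauto
    refine ⟨?_, ?_⟩
    · rw [card_insert_of_notMem (fun h => ht (mem_of_mem_erase h)), card_erase_of_mem hs,
        Nat.sub_add_cancel (card_pos.2 ⟨s, hs⟩)]
    · rw [hpair, Nat.cast_one]
      rcases hdir with rfl | rfl
      · exact ⟨s, rfl⟩
      · exact ⟨t, pair_comm _ _⟩

/-- `F e` is the net number of particles that cross the edge from `e` to `e + 1` when
the configuration `x` is transported to `y`. -/
def IsFlow (x y : Finset (Fin L)) (F : Fin L → ℤ) : Prop :=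
  ∀ p : Fin L, F (p - 1) - F p = (if p ∈ y then 1 else 0) - (if p ∈ x then 1 else 0)

theorem isFlow_zero (x : Finset (Fin L)) : IsFlow x x 0 := fun p => by simp

namespace IsFlow

variable {x y z : Finset (Fin L)} {F G : Fin L → ℤ}

theorem add (hF : IsFlow x y F) (hG : IsFlow y z G) : IsFlow x z (F + G) := fun p => by
  have := hF p; have := hG p; simp only [Pi.add_apply]; linarith

theorem neg (hF : IsFlow x y F) : IsFlow y x (-F) := fun p => by
  have := hF p; simp only [Pi.neg_apply]; linarith

theorem add_const (hF : IsFlow x y F) (c : ℤ) : IsFlow x y (fun e => F e + c) := fun p => by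
  have := hF p; linarith

theorem eq_of_eq_zero (hF : IsFlow x y 0) : x = y := by
  ext p
  have := hF p
  split_ifs at this <;> simp_all

end IsFlow

theorem isFlow_move_add_one {x : Finset (Fin L)} {e : Fin L} (he : e ∈ x) (he1 : e + 1 ∉ x) :
    IsFlow x (insert (e + 1) (x.erase e)) (Pi.single e 1) := by
  intro p
  have hne : e + 1 ≠ e := fun h => he1 (by rwa [h])
  have hne' : e - 1 ≠ e := fun h => hne (by rw [← h, sub_add_cancel, h])
  by_cases hp : p = e + 1
  · subst hp
    simp [hne, he1]
  · by_cases hpe : p = e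
    · subst hpe
      simp [hne', he, Ne.symm hne]
    · have : p - 1 ≠ e := fun h => hp (sub_eq_iff_eq_add.1 h)
      simp [hp, hpe, this]

theorem IsFlow.exists_mem_add_one_notMem {x y : Finset (Fin L)} {F : Fin L → ℤ}
    (hF : IsFlow x y F) (hx : x.Nonempty) (hlt : x.card < L) (hpos : ∃ e, 0 < F e) :
    ∃ e, 0 < F e ∧ e ∈ x ∧ e + 1 ∉ x := by
  have hup : ∀ e, e + 1 ∈ x → 0 < F e → 0 < F (e + 1) := fun e he h => by
    have := hF (e + 1)
    rw [add_sub_cancel_right, if_pos he] at this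
    split_ifs at this <;> omega
  have hdown : ∀ e, e ∉ x → 0 < F e → 0 < F (e - 1) := fun e he h => by
    have := hF e
    rw [if_neg he] at this
    split_ifs at this <;> omega
  have hin : ∃ e, 0 < F e ∧ e ∈ x := by
    by_contra! hout
    obtain ⟨e0, he0⟩ := hpos
    have hall := Fin.induction_sub_one (P := fun e => 0 < F e) e0 he0
      (fun e he => hdown e (hout e he) he)
    obtain ⟨a, ha⟩ := hx
    exact hout a (hall a) ha
  by_contra! hclosed
  obtain ⟨e0, he0, he0x⟩ := hin
  have hall := Fin.induction_add_one (P := fun e => 0 < F e ∧ e ∈ x) e0 ⟨he0, he0x⟩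
    (fun e ⟨he, hex⟩ => have h1 := hclosed e he hex; ⟨hup e h1 he, h1⟩)
  have : x = univ := eq_univ_of_forall fun e => (hall e).2
  rw [this, card_univ, Fintype.card_fin] at hlt
  exact lt_irrefl _ hlt

theorem IsFlow.exists_adj_decrease {x y : Finset (Fin L)} {F : Fin L → ℤ} (hF : IsFlow x y F)
    (hx : x.Nonempty) (hlt : x.card < L) (hpos : ∃ e, 0 < F e) :
    ∃ x' F', (hcGraph L).Adj x x' ∧ IsFlow x' y F' ∧
      ∑ e, (F' e).natAbs + 1 = ∑ e, (F e).natAbs := by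
  obtain ⟨e, he, hex, he1⟩ := hF.exists_mem_add_one_notMem hx hlt hpos
  refine ⟨_, F - Pi.single e 1, hcGraph_adj_iff.2 ⟨e, e + 1, hex, he1, Or.inl rfl, rfl⟩, ?_,
    sum_natAbs_sub_single he⟩
  simpa [neg_add_eq_sub] using (isFlow_move_add_one hex he1).neg.add hF

theorem IsFlow.exists_walk_length_le {n : ℕ} : ∀ {x y : Finset (Fin L)} {F : Fin L → ℤ},
    IsFlow x y F → x.card = y.card → x.card < L → ∑ e, (F e).natAbs ≤ n →
      ∃ w : (hcGraph L).Walk x y, w.length ≤ n := by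
  induction n with
  | zero =>
    intro x y F hF _ _ hsum
    have : F = 0 := funext fun e => by
      simpa using (sum_eq_zero_iff.1 (Nat.le_zero.1 hsum)) e (mem_univ e)
    subst this
    obtain rfl := hF.eq_of_eq_zero
    exact ⟨.nil, le_rfl⟩
  | succ n ih =>
    intro x y F hF hcard hlt hsum
    by_cases hxy : x = y
    · subst hxy
      exact ⟨.nil, Nat.zero_le _⟩
    have hx : x.Nonempty := by
      rw [nonempty_iff_ne_empty]
      rintro rfl
      exact hxy (card_eq_zero.1 hcard.symm).symm
    obtain ⟨e, he⟩ : ∃ e, F e ≠ 0 := by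
      by_contra! h
      exact hxy (IsFlow.eq_of_eq_zero (by rwa [show F = 0 from funext h] at hF))
    rcases he.lt_or_gt with hneg | hpos
    · obtain ⟨y', F', hadj, hF', hcost⟩ := hF.neg.exists_adj_decrease
        (card_pos.1 (hcard ▸ card_pos.2 hx)) (hcard ▸ hlt) ⟨e, neg_pos.2 hneg⟩
      obtain ⟨w, hw⟩ := ih hF'.neg (hcard.trans hadj.1) hlt
        (by simp only [Pi.neg_apply, Int.natAbs_neg] at hcost ⊢; omega)
      exact ⟨w.concat hadj.symm, by rw [SimpleGraph.Walk.length_concat]; omega⟩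
    · obtain ⟨x', F', hadj, hF', hcost⟩ := hF.exists_adj_decrease hx hlt ⟨e, hpos⟩
      obtain ⟨w, hw⟩ := ih hF' (hadj.1 ▸ hcard) (hadj.1 ▸ hlt) (by omega)
      exact ⟨.cons hadj w, by rw [SimpleGraph.Walk.length_cons]; omega⟩

theorem IsFlow.dist_le {x y : Finset (Fin L)} {F : Fin L → ℤ} (hF : IsFlow x y F)
    (hcard : x.card = y.card) (hlt : x.card < L) :
    (hcGraph L).dist x y ≤ ∑ e, (F e).natAbs := by
  obtain ⟨w, hw⟩ := hF.exists_walk_length_le hcard hlt le_rfl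
  exact (SimpleGraph.dist_le w).trans hw

/-- Shifting an optimal flow by `-1` costs `L - 2 * #{e | 0 < F e}` more. -/
theorem IsFlow.two_mul_card_pos_le {x y : Finset (Fin L)} {F : Fin L → ℤ} (hF : IsFlow x y F)
    (hcard : x.card = y.card) (hlt : x.card < L)
    (hopt : ∑ e, (F e).natAbs ≤ (hcGraph L).dist x y) :
    2 * #{e | 0 < F e} ≤ L := by
  have hshift := (hF.add_const (-1)).dist_le hcard hlt
  have hterm : ∀ e, |F e + -1| = |F e| + 1 - 2 * if 0 < F e then 1 else 0 := fun e => by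
    split_ifs <;> cases abs_cases (F e) <;> cases abs_cases (F e + -1) <;> omega
  have hsum : ((∑ e, (F e + -1).natAbs : ℕ) : ℤ) =
      ((∑ e, (F e).natAbs : ℕ) : ℤ) + L - 2 * #{e | 0 < F e} := by
    push_cast
    simp only [hterm, sum_sub_distrib, sum_add_distrib, ← mul_sum, sum_boole, sum_const,
      card_univ, Fintype.card_fin, nsmul_eq_mul, mul_one]
  omega

theorem IsFlow.two_mul_card_neg_le {x y : Finset (Fin L)} {F : Fin L → ℤ} (hF : IsFlow x y F)
    (hcard : x.card = y.card) (hlt : x.card < L)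
    (hopt : ∑ e, (F e).natAbs ≤ (hcGraph L).dist x y) :
    2 * #{e | F e < 0} ≤ L := by
  simpa using hF.neg.two_mul_card_pos_le hcard.symm (hcard ▸ hlt)
    (by simpa [SimpleGraph.dist_comm] using hopt)

/-- When `L = 2` both directions fit the move `s ↦ t`, and the clockwise one is chosen. -/
def moveFlow (s t : Fin L) : Fin L → ℤ :=
  if t = s + 1 then Pi.single s 1 else -Pi.single t 1

theorem IsMove.isFlow_moveFlow {x y : Finset (Fin L)} {s t : Fin L} (h : IsMove x y s t) :
    IsFlow x y (moveFlow s t) := by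
  obtain ⟨hs, ht, hst, rfl⟩ := h
  by_cases hcw : t = s + 1
  · subst hcw
    simpa [moveFlow] using isFlow_move_add_one hs ht
  · obtain rfl := hst.resolve_left hcw
    set x' := insert t (x.erase (t + 1))
    have hback : insert (t + 1) (x'.erase t) = x := by
      rw [erase_insert (fun h => ht (mem_of_mem_erase h)), insert_erase hs]
    have ht1 : t + 1 ∉ x' := by
      rw [mem_insert, mem_erase]
      rintro (h | ⟨h, -⟩)
      · exact ht (by rwa [← h])
      · exact h rfl
    have := isFlow_move_add_one (mem_insert_self t _) ht1
    rw [hback] at this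
    simpa [moveFlow, hcw] using this.neg

theorem moveFlow_self_of_eq_add_one {s t : Fin L} (h : t = s + 1) : moveFlow s t s = 1 := by
  simp [moveFlow, h]

theorem moveFlow_self_of_ne_add_one {s t : Fin L} (h : t ≠ s + 1) : moveFlow s t t = -1 := by
  simp [moveFlow, h]

theorem sum_natAbs_moveFlow (s t : Fin L) : ∑ e, (moveFlow s t e).natAbs = 1 := by
  unfold moveFlow
  split_ifs <;> simp [Pi.single_apply, apply_ite Int.natAbs]

def pathFlow (s t : ℕ → Fin L) (k : ℕ) (e : Fin L) : ℤ :=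
  ∑ l ∈ range k, moveFlow (s l) (t l) e

section Path

variable {u : ℕ → Finset (Fin L)} {s t : ℕ → Fin L} {k : ℕ}

theorem isFlow_pathFlow (hmove : ∀ l < k, IsMove (u l) (u (l + 1)) (s l) (t l)) :
    IsFlow (u 0) (u k) (pathFlow s t k) := by
  induction k with
  | zero =>
    have h0 : pathFlow s t 0 = 0 := funext fun e => sum_range_zero _
    exact h0 ▸ isFlow_zero (u 0)
  | succ k ih =>
    have hsucc : pathFlow s t (k + 1) = pathFlow s t k + moveFlow (s k) (t k) :=
      funext fun e => sum_range_succ _ _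
    exact hsucc ▸ (ih fun l hl => hmove l (by omega)).add (hmove k (by omega)).isFlow_moveFlow

theorem sum_natAbs_pathFlow_le : ∑ e, (pathFlow s t k e).natAbs ≤ k := by
  calc ∑ e, (pathFlow s t k e).natAbs
      ≤ ∑ e, ∑ l ∈ range k, (moveFlow (s l) (t l) e).natAbs :=
        sum_le_sum fun e _ => Int.natAbs_sum_le _ _
    _ = k := by rw [sum_comm]; simp [sum_natAbs_moveFlow]

/-- Along a geodesic no edge is crossed in both directions. -/
theorem natAbs_pathFlow_eq_of_geodesic (hmove : ∀ l < k, IsMove (u l) (u (l + 1)) (s l) (t l))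
    (hcard : (u 0).card = (u k).card) (hlt : (u 0).card < L)
    (hk : k = (hcGraph L).dist (u 0) (u k)) (e : Fin L) :
    (pathFlow s t k e).natAbs = ∑ l ∈ range k, (moveFlow (s l) (t l) e).natAbs := by
  have hcost : ∑ e, ∑ l ∈ range k, (moveFlow (s l) (t l) e).natAbs = k := by
    rw [sum_comm]; simp [sum_natAbs_moveFlow]
  have hge := (isFlow_pathFlow hmove).dist_le hcard hlt
  unfold pathFlow at hge ⊢
  have hle : ∀ e ∈ (univ : Finset (Fin L)),
      (∑ l ∈ range k, moveFlow (s l) (t l) e).natAbs ≤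
        ∑ l ∈ range k, (moveFlow (s l) (t l) e).natAbs :=
    fun e _ => Int.natAbs_sum_le _ _
  exact (sum_eq_sum_iff_of_le hle).1 (le_antisymm (sum_le_sum hle) (by omega)) e (mem_univ e)

theorem pathFlow_sign_of_move
    (hnc : ∀ e, (pathFlow s t k e).natAbs = ∑ l ∈ range k, (moveFlow (s l) (t l) e).natAbs)
    {l : ℕ} (hl : l < k) (hst : t l = s l + 1 ∨ s l = t l + 1) :
    (t l = s l + 1 ∧ 0 < pathFlow s t k (s l)) ∨
      (s l = t l + 1 ∧ pathFlow s t k (t l) < 0) := by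
  by_cases hcw : t l = s l + 1
  · refine Or.inl ⟨hcw, Int.sum_pos_of_natAbs_sum_eq (hnc (s l)) (mem_range.2 hl) ?_⟩
    rw [moveFlow_self_of_eq_add_one hcw]; exact one_pos
  · refine Or.inr ⟨hst.resolve_left hcw,
      Int.sum_neg_of_natAbs_sum_eq (hnc (t l)) (mem_range.2 hl) ?_⟩
    rw [moveFlow_self_of_ne_add_one hcw]; exact neg_one_lt_zero

theorem IsTracking.step {N : ℕ} {ut : ℕ → Fin N → Fin L} (htr : IsTracking L N u k ut)
    (hmove : ∀ l < k, IsMove (u l) (u (l + 1)) (s l) (t l)) (j : Fin N) {l : ℕ} (hl : l < k) :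
    ut (l + 1) j = ut l j ∨ (ut l j = s l ∧ ut (l + 1) j = t l) := by
  obtain ⟨-, himg, hnext⟩ := htr
  by_cases hstay : ut l j ∈ u (l + 1)
  · exact Or.inl ((hnext l hl j).1 hstay)
  · have hnew := (hnext l hl j).2 hstay
    have hmem : ut l j ∈ u l := himg l hl.le ▸ mem_image_of_mem _ (mem_univ j)
    obtain ⟨-, -, -, hu⟩ := hmove l hl
    rw [hu] at hstay hnew
    simp only [mem_sdiff, mem_insert, mem_erase] at hstay hnew
    right
    constructor
    · tauto
    · rcases hnew with ⟨h | h, hnot⟩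
      · exact h
      · exact absurd h.2 hnot

end Path

end

/-- Along any shortest path, each particle's travelled distance equals the cycle distance
between its initial and final positions, is at most `L/2`, and the final position is the
initial one shifted by `±L_j^u`. -/
theorem travel_le_half (L N : ℕ) [NeZero L] (hN : N < L)
    (x y : Finset (Fin L)) (hx : x.card = N) (hy : y.card = N)
    (k : ℕ) (hk : k = dN L x y)
    (u : ℕ → Finset (Fin L)) (hpath : IsPathN L u k x y)
    (ut : ℕ → Fin N → Fin L) (htr : IsTracking L N u k ut) :
    ∀ j : Fin N,
      travel ut k j = cycDist (ut 0 j) (ut k j) ∧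
      2 * travel ut k j ≤ L ∧
      (ut k j = ut 0 j + ((travel ut k j : ℕ) : Fin L) ∨
       ut k j = ut 0 j - ((travel ut k j : ℕ) : Fin L)) := by
  intro j
  have hL : 2 ≤ L := by have := j.pos; omega
  obtain ⟨rfl, rfl, hadj⟩ := hpath
  choose! s t hmove using fun l hl => hcGraph_adj_iff.1 (hadj l hl)
  have hcard : (u 0).card = (u k).card := hx.trans hy.symm
  have hlt : (u 0).card < L := hx ▸ hN
  have hF := isFlow_pathFlow hmove
  have hopt : ∑ e, (pathFlow s t k e).natAbs ≤ (hcGraph L).dist (u 0) (u k) :=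
    sum_natAbs_pathFlow_le.trans_eq hk
  have hnc := natAbs_pathFlow_eq_of_geodesic hmove hcard hlt hk
  obtain ⟨D, htravel, hend, hposD, hnegD⟩ :=
    exists_displacement (p := fun l => ut l j) (G := pathFlow s t k) hL fun l hl => by
      rcases htr.step hmove j hl with hstay | ⟨hs, ht⟩
      · exact Or.inl hstay
      · rw [hs, ht]
        exact Or.inr (pathFlow_sign_of_move hnc hl (hmove l hl).2.2.1)
  have hD := two_mul_natAbs_le_of_sweep (hF.two_mul_card_pos_le hcard hlt hopt)
    (hF.two_mul_card_neg_le hcard hlt hopt) hposD hnegD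
  obtain ⟨hdist, hpm⟩ := cycDist_add_intCast (ut 0 j) hD
  rw [show travel ut k j = D.natAbs from htravel, show ut k j = ut 0 j + D from hend]
  exact ⟨hdist.symm, hD, hpm⟩
end
end

section
/- Under the hard-core path setup on the cycle with droplet initial condition c avoiding e₀ = {0,L−1}: every index moving counter-clockwise precedes every index that does not move counter-clockwise, i.e., sup I_-^u ≤ inf(I_0^u ∪ I_+^u), and similarly sup(I_-^u ∪ I_0^u) ≤ inf I_+^u (with conventions inf ∅ = ∞, sup ∅ = −∞). -/
open Finset
open scoped Classical
open Fin.NatCast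

noncomputable section

/-!
Along a shortest path every particle moves along a geodesic of the cycle: each step moves one
particle by one site, so the particles' path lengths add up to the length of the path, while
moving particles one at a time (`edist_le_labelledDist`) shows that the graph distance is at most
the sum of the cycle distances between the labelled initial and final positions.

Consequently a moving particle lies in `I_-` or `I_+` according to the direction of its first
step. Since the droplet does not wrap around `{0, L - 1}`, particle `j + 1` starts right next to
particle `j`. If `j + 1` first steps counter-clockwise it enters the initial site of `j`, so `j`
has left it before, and not clockwise, where `j + 1` still sat; hence `I_-` is closed downwards,
and symmetrically `I_+` is closed upwards. Particles of `I_0` do not move, and no particle lies in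
both `I_-` and `I_+`.
-/

open Fin.CommRing

section CycleDistance

variable {L : ℕ}

lemma Fin.val_sub_eq_ite (a b : Fin L) :
    (a - b).val = if b.val ≤ a.val then a.val - b.val else L + a.val - b.val := by
  split_ifs with h
  · exact Fin.coe_sub_iff_le.mpr h
  · exact Fin.coe_sub_iff_lt.mpr (not_le.mp h)

lemma cycDist_eq_zero_iff [NeZero L] {a b : Fin L} : cycDist a b = 0 ↔ a = b := by
  simp [cycDist, Fin.val_eq_zero_iff, sub_eq_zero, eq_comm]

@[simp]
lemma cycDist_self [NeZero L] (a : Fin L) : cycDist a a = 0 := cycDist_eq_zero_iff.mpr rfl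

lemma cycDist_triangle (a b c : Fin L) : cycDist a c ≤ cycDist a b + cycDist b c := by
  have := a.isLt; have := b.isLt; have := c.isLt
  simp only [cycDist, Fin.val_sub_eq_ite]
  split_ifs <;> omega

lemma cycDist_add_mul_le [NeZero L] {a s : Fin L} (hs : s = 1 ∨ s = -1) (n : ℕ) :
    cycDist a (a + n * s) ≤ n := by
  refine le_trans ?_ (Fin.val_natCast n L ▸ Nat.mod_le n L)
  rcases hs with rfl | rfl
  · exact (min_le_right _ _).trans_eq (by ring_nf)
  · exact (min_le_left _ _).trans_eq (by ring_nf)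

lemma exists_eq_add_cycDist_mul [NeZero L] (a b : Fin L) :
    ∃ s : Fin L, (s = 1 ∨ s = -1) ∧ b = a + (cycDist a b : ℕ) * s := by
  rcases le_total (b - a).val (a - b).val with h | h
  · refine ⟨1, Or.inl rfl, ?_⟩
    rw [cycDist, min_eq_right h, Fin.cast_val_eq_self]
    ring
  · refine ⟨-1, Or.inr rfl, ?_⟩
    rw [cycDist, min_eq_left h, Fin.cast_val_eq_self]
    ring

lemma add_one_ne_sub_one [NeZero L] (hL : 3 ≤ L) (a : Fin L) : a + 1 ≠ a - 1 := by
  intro h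
  have h2 : ((2 : ℕ) : Fin L) = 0 := by push_cast; linear_combination h
  have := Nat.le_of_dvd two_pos (Fin.natCast_eq_zero.mp h2)
  omega

end CycleDistance

lemma Nat.exists_forall_le_and_not_succ {P : ℕ → Prop} (h0 : P 0) {l : ℕ} (hl : ¬ P l) :
    ∃ m < l, (∀ t ≤ m, P t) ∧ ¬ P (m + 1) := by
  classical
  have hex : ∃ n, ¬ P n := ⟨l, hl⟩
  have hpos : Nat.find hex ≠ 0 := fun h => Nat.find_spec hex (h ▸ h0)
  refine ⟨Nat.find hex - 1, by have := Nat.find_min' hex hl; omega, fun t ht => ?_, ?_⟩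
  · exact not_not.mp (Nat.find_min hex (by omega))
  · rw [Nat.sub_add_cancel (Nat.one_le_iff_ne_zero.mpr hpos)]
    exact Nat.find_spec hex

lemma Finset.exists_sdiff_eq_singleton_of_symmDiff_eq_pair {α : Type*} [DecidableEq α]
    {X Y : Finset α} {p q : α} (hcard : X.card = Y.card) (h : symmDiff X Y = {p, q}) :
    ∃ a b, X \ Y = {a} ∧ Y \ X = {b} ∧ ({a, b} : Finset α) = {p, q} := by
  have hU : X \ Y ∪ Y \ X = {p, q} := h
  have hAB : (X \ Y).card = (Y \ X).card := by
    have := card_sdiff_add_card_inter X Y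
    have := card_sdiff_add_card_inter Y X
    rw [inter_comm] at this
    omega
  have hsum : (X \ Y).card + (Y \ X).card = ({p, q} : Finset α).card := by
    rw [← card_union_of_disjoint disjoint_sdiff_sdiff, hU]
  have := card_le_two (a := p) (b := q)
  have := (insert_nonempty p {q}).card_pos
  obtain ⟨a, ha⟩ := card_eq_one.mp (show (X \ Y).card = 1 by omega)
  obtain ⟨b, hb⟩ := card_eq_one.mp (show (Y \ X).card = 1 by omega)
  exact ⟨a, b, ha, hb, by rw [← hU, ha, hb]; rfl⟩

lemma Finset.symmDiff_insert_erase {α : Type*} [DecidableEq α] {X : Finset α} {v w : α}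
    (hw : w ∈ X) (hv : v ∉ X) : symmDiff X (insert v (X.erase w)) = {w, v} := by
  ext z
  simp only [mem_symmDiff, mem_insert, mem_erase, mem_singleton]
  constructor
  · rintro (⟨hz, h⟩ | ⟨rfl | ⟨-, hz⟩, h⟩)
    · tauto
    · exact Or.inr rfl
    · exact absurd hz h
  · rintro (rfl | rfl)
    · exact Or.inl ⟨hw, by rintro (rfl | ⟨h, -⟩) <;> tauto⟩
    · exact Or.inr ⟨Or.inl rfl, hv⟩

lemma Finset.image_update_univ_eq_insert_erase {ι α : Type*} [Fintype ι] [DecidableEq ι]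
    [DecidableEq α] {x : ι → α} (hx : Function.Injective x) (i : ι) (v : α) :
    image (Function.update x i v) univ = insert v ((image x univ).erase (x i)) := by
  ext z
  simp only [mem_image, mem_univ, true_and, mem_insert, mem_erase]
  constructor
  · rintro ⟨l, rfl⟩
    rcases eq_or_ne l i with rfl | hl
    · simp
    · simp only [Function.update_of_ne hl]
      exact Or.inr ⟨fun h => hl (hx h), l, rfl⟩
  · rintro (rfl | ⟨hz, l, rfl⟩)
    · exact ⟨i, by simp⟩
    · exact ⟨l, by rw [Function.update_of_ne (by rintro rfl; exact hz rfl)]⟩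

lemma Function.Injective.update_of_notMem {ι α : Type*} [Fintype ι] [DecidableEq ι]
    [DecidableEq α] {x : ι → α} (hx : Function.Injective x) {i : ι} {v : α}
    (hv : v ∉ image x univ) : Function.Injective (Function.update x i v) := by
  have hxv : ∀ l, x l ≠ v := fun l h => hv (h ▸ mem_image_of_mem x (mem_univ l))
  intro l l' h
  by_cases hl : l = i <;> by_cases hl' : l' = i
  · rw [hl, hl']
  · subst hl
    rw [Function.update_self, Function.update_of_ne hl'] at h
    exact absurd h.symm (hxv l')
  · subst hl'
    rw [Function.update_self, Function.update_of_ne hl] at h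
    exact absurd h (hxv l)
  · rw [Function.update_of_ne hl, Function.update_of_ne hl'] at h
    exact hx h

lemma Fin.antitone_of_forall_eq_succ {N : ℕ} {P : Fin N → Prop}
    (h : ∀ i j : Fin N, (i : ℕ) = j + 1 → P i → P j) : Antitone P := by
  cases N with
  | zero => exact fun i => i.elim0
  | succ n => exact Fin.antitone_iff_succ_le.mpr fun i => h _ _ (by simp)

lemma Fin.monotone_of_forall_eq_succ {N : ℕ} {P : Fin N → Prop}
    (h : ∀ i j : Fin N, (i : ℕ) = j + 1 → P j → P i) : Monotone P := by
  cases N with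
  | zero => exact fun i => i.elim0
  | succ n => exact Fin.monotone_iff_le_succ.mpr fun i => h _ _ (by simp)

section PathLength

variable {L : ℕ}

def pathLength (f : ℕ → Fin L) (a b : ℕ) : ℕ :=
  ∑ l ∈ Ico a b, cycDist (f l) (f (l + 1))

variable (f : ℕ → Fin L)

lemma pathLength_add {a b c : ℕ} (hab : a ≤ b) (hbc : b ≤ c) :
    pathLength f a b + pathLength f b c = pathLength f a c :=
  Finset.sum_Ico_consecutive _ hab hbc

lemma pathLength_self_succ (a : ℕ) : pathLength f a (a + 1) = cycDist (f a) (f (a + 1)) := by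
  simp [pathLength]

lemma cycDist_le_pathLength [NeZero L] {a b : ℕ} (hab : a ≤ b) :
    cycDist (f a) (f b) ≤ pathLength f a b := by
  induction b, hab using Nat.le_induction with
  | base => simp
  | succ b hab ih =>
    rw [← pathLength_add f hab b.le_succ, pathLength_self_succ]
    exact (cycDist_triangle _ (f b) _).trans (by omega)

lemma pathLength_eq_cycDist_of_le [NeZero L] {a b c : ℕ} (hab : a ≤ b) (hbc : b ≤ c)
    (h : pathLength f a c = cycDist (f a) (f c)) : pathLength f a b = cycDist (f a) (f b) := by
  have := cycDist_le_pathLength f hab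
  have := cycDist_le_pathLength f hbc
  have := cycDist_triangle (f a) (f b) (f c)
  have := pathLength_add f hab hbc
  omega

lemma eq_of_pathLength_eq_zero [NeZero L] {a b : ℕ} (hab : a ≤ b) (h : pathLength f a b = 0) :
    f b = f a :=
  (cycDist_eq_zero_iff.mp (Nat.le_zero.mp (h ▸ cycDist_le_pathLength f hab))).symm

def IsFirstMove (T : ℕ) : Prop := (∀ t ≤ T, f t = f 0) ∧ f (T + 1) ≠ f 0

lemma exists_isFirstMove {k : ℕ} (h : ∃ l ≤ k, f l ≠ f 0) : ∃ T < k, IsFirstMove f T := by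
  obtain ⟨l, hlk, hl⟩ := h
  obtain ⟨T, hTl, hT⟩ := Nat.exists_forall_le_and_not_succ (P := fun t => f t = f 0) rfl hl
  exact ⟨T, by omega, hT⟩

lemma IsFirstMove.eq_of_pathLength_eq_one [NeZero L] {T l : ℕ} (hT : IsFirstMove f T)
    (hlen : pathLength f 0 l = 1) (hl : f l ≠ f 0) : f l = f (T + 1) := by
  have hTl : T + 1 ≤ l := by
    by_contra h
    exact hl (hT.1 l (by omega))
  have hfirst : 1 ≤ pathLength f 0 (T + 1) :=
    (Nat.one_le_iff_ne_zero.mpr (mt cycDist_eq_zero_iff.mp hT.2.symm)).trans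
      (cycDist_le_pathLength f (Nat.zero_le _))
  have := pathLength_add f (Nat.zero_le _) hTl
  exact eq_of_pathLength_eq_zero f hTl (by omega)

end PathLength

section Rays

variable {L : ℕ} [NeZero L] {a s : Fin L}

lemma cycDist_add_mul_add_mul_le (hs : s = 1 ∨ s = -1) {t t' : ℕ} (h : t ≤ t') :
    cycDist (a + (t : Fin L) * s) (a + (t' : Fin L) * s) ≤ t' - t := by
  have : a + (t' : Fin L) * s = (a + (t : Fin L) * s) + ((t' - t : ℕ) : Fin L) * s := by
    rw [Nat.cast_sub h]; ring
  rw [this]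
  exact cycDist_add_mul_le hs _

lemma add_mul_injOn (hs : s = 1 ∨ s = -1) :
    Set.InjOn (fun t : ℕ => a + t * s) (Set.Iio L) := by
  intro t ht t' ht' h
  have hss : s * s = 1 := by rcases hs with rfl | rfl <;> ring
  have hcast : (t : Fin L) = t' := by
    linear_combination s * (add_left_cancel h : (t : Fin L) * s = t' * s) - (t - t') * hss
  simpa [Fin.val_natCast, Nat.mod_eq_of_lt ht, Nat.mod_eq_of_lt ht'] using
    congrArg Fin.val hcast

lemma exists_first_vacant {S : Finset (Fin L)} (hS : S.card < L) (hs : s = 1 ∨ s = -1)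
    (ha : a ∈ S) :
    ∃ m, (∀ t ≤ m, a + (t : ℕ) * s ∈ S) ∧ a + ((m + 1 : ℕ) : Fin L) * s ∉ S := by
  obtain ⟨l, -, hl⟩ : ∃ l < L, a + (l : ℕ) * s ∉ S := by
    by_contra! h
    obtain ⟨t, ht, t', ht', hne, heq⟩ := Finset.exists_ne_map_eq_of_card_lt_of_maps_to
      (s := range L) (by simpa using hS) (f := fun t : ℕ => a + t * s)
      (fun t ht => h t (by simpa using ht))
    exact hne (add_mul_injOn hs (by simpa using ht) (by simpa using ht') heq)
  obtain ⟨m, -, hm⟩ := Nat.exists_forall_le_and_not_succ (P := fun t : ℕ => a + t * s ∈ S)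
    (by simpa using ha) hl
  exact ⟨m, hm⟩

end Rays

section LabelledDistance

variable {L N : ℕ}

def labelledDist (x y : Fin N → Fin L) : ℕ := ∑ j, cycDist (x j) (y j)

def mismatches (x y : Fin N → Fin L) : Finset (Fin N) := univ.filter fun j => x j ≠ y j

variable {x y : Fin N → Fin L} {i j : Fin N}

lemma labelledDist_update_lt {z : Fin L} (h : cycDist z (y i) < cycDist (x i) (y i)) :
    labelledDist (Function.update x i z) y < labelledDist x y := by
  refine Finset.sum_lt_sum (fun l _ => ?_) ⟨i, mem_univ i, by simpa using h⟩
  rcases eq_or_ne l i with rfl | hl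
  · simpa using h.le
  · simp [Function.update_of_ne hl]

lemma labelledDist_swap_le
    (h : cycDist (x i) (x j) + cycDist (x j) (y i) ≤ cycDist (x i) (y i)) :
    labelledDist x (y ∘ Equiv.swap i j) ≤ labelledDist x y := by
  rcases eq_or_ne i j with rfl | hij
  · simp
  unfold labelledDist
  rw [← Finset.sum_add_sum_compl {i, j}, ← Finset.sum_add_sum_compl {i, j} fun l => _]
  refine add_le_add ?_ (Finset.sum_congr rfl fun l hl => ?_).le
  · have := cycDist_triangle (x i) (x j) (y j)
    simp only [sum_pair hij, Function.comp_apply, Equiv.swap_apply_left,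
      Equiv.swap_apply_right]
    omega
  · simp only [mem_compl, mem_insert, mem_singleton, not_or] at hl
    simp [Equiv.swap_apply_of_ne_of_ne hl.1 hl.2]

lemma card_mismatches_swap_lt (hy : Function.Injective y) (hi : x i ≠ y i) (hj : x j = y i) :
    (mismatches x (y ∘ Equiv.swap i j)).card < (mismatches x y).card := by
  have hij : i ≠ j := by rintro rfl; exact hi hj
  refine Finset.card_lt_card ⟨fun l hl => ?_, fun hsub => ?_⟩
  · simp only [mismatches, mem_filter, mem_univ, true_and, Function.comp_apply] at hl ⊢
    rcases eq_or_ne l i with rfl | hli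
    · exact hi
    rcases eq_or_ne l j with rfl | hlj
    · simp [hj] at hl
    · simpa [Equiv.swap_apply_of_ne_of_ne hli hlj] using hl
  · have := hsub (show j ∈ mismatches x y by
      simpa [mismatches, hj] using fun h => hij (hy h))
    simp [mismatches, hj] at this

lemma hcGraph_adj_image_update [NeZero L] (hx : Function.Injective x) {s : Fin L}
    (hs : s = 1 ∨ s = -1) (hv : x i + s ∉ image x univ) :
    (hcGraph L).Adj (image x univ) (image (Function.update x i (x i + s)) univ) := by
  refine ⟨by rw [card_image_of_injective _ hx,
    card_image_of_injective _ (hx.update_of_notMem hv)], ?_⟩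
  rw [image_update_univ_eq_insert_erase hx,
    symmDiff_insert_erase (mem_image_of_mem x (mem_univ i)) hv, Nat.cast_one]
  rcases hs with rfl | rfl
  · exact ⟨x i, rfl⟩
  · exact ⟨x i + -1, by rw [Finset.pair_comm]; ring_nf⟩

lemma labelledDist_update_swap_lt [NeZero L] {s : Fin L} (hs : s = 1 ∨ s = -1) {m : ℕ}
    (hyi : y i = x i + (cycDist (x i) (y i) : ℕ) * s) (hm : m < cycDist (x i) (y i))
    (hj : x j = x i + (m : ℕ) * s) :
    labelledDist (Function.update x j (x j + s)) (y ∘ Equiv.swap i j) < labelledDist x y := by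
  set D := cycDist (x i) (y i)
  have hstep : x j + s = x i + ((m + 1 : ℕ) : Fin L) * s := by rw [hj]; push_cast; ring
  have hm0 := cycDist_add_mul_add_mul_le (a := x i) hs (Nat.zero_le m)
  have hmD := cycDist_add_mul_add_mul_le (a := x i) hs hm.le
  have hm1D := cycDist_add_mul_add_mul_le (a := x i) hs (show m + 1 ≤ D by omega)
  have htri := cycDist_triangle (x i) (x j) (y i)
  simp only [Nat.cast_zero, zero_mul, add_zero, ← hyi, ← hj, ← hstep] at hm0 hmD hm1D
  refine lt_of_lt_of_le (labelledDist_update_lt ?_) (labelledDist_swap_le (by omega))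
  simp only [Function.comp_apply, Equiv.swap_apply_right]
  omega

/-- Move a misplaced particle `i` towards its target. If the run of occupied sites in front of it
ends before the target, the last particle of the run steps forward and takes over the target of
`i`, which lowers the labelled distance; otherwise the particle sitting on the target exchanges
targets with `i`, which does not raise it and places one more particle. -/
theorem edist_le_labelledDist [NeZero L] (hNL : N < L) (x y : Fin N → Fin L)
    (hx : Function.Injective x) (hy : Function.Injective y) :
    (hcGraph L).edist (image x univ) (image y univ) ≤ labelledDist x y := by
  by_cases hxy : x = y
  · simp [hxy]
  obtain ⟨i, hi⟩ := Function.ne_iff.mp hxy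
  obtain ⟨s, hs, hyi⟩ := exists_eq_add_cycDist_mul (x i) (y i)
  set D := cycDist (x i) (y i)
  have hcard : (image x univ).card < L := by
    rwa [card_image_of_injective _ hx, card_univ, Fintype.card_fin]
  obtain ⟨m, hocc, hvac⟩ := exists_first_vacant hcard hs (mem_image_of_mem x (mem_univ i))
  have hswap_image : ∀ j, image (y ∘ Equiv.swap i j) univ = image y univ := fun j => by
    rw [← image_image, image_univ_equiv]
  rcases lt_or_ge m D with hmD | hDm
  · obtain ⟨j, -, hj⟩ := mem_image.mp (hocc m le_rfl)
    have hstep : x j + s = x i + ((m + 1 : ℕ) : Fin L) * s := by rw [hj]; push_cast; ring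
    set x' := Function.update x j (x j + s)
    set y' := y ∘ Equiv.swap i j
    have hlt : labelledDist x' y' < labelledDist x y := labelledDist_update_swap_lt hs hyi hmD hj
    have hadj := hcGraph_adj_image_update hx hs (i := j) (hstep ▸ hvac)
    calc (hcGraph L).edist (image x univ) (image y univ)
        ≤ (hcGraph L).edist (image x univ) (image x' univ)
          + (hcGraph L).edist (image x' univ) (image y' univ) := by
          rw [hswap_image]; exact SimpleGraph.edist_triangle
      _ ≤ 1 + labelledDist x' y' := by
          gcongr
          · exact (SimpleGraph.edist_eq_one_iff_adj.mpr hadj).le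
          · exact edist_le_labelledDist hNL x' y'
              (hx.update_of_notMem (hstep ▸ hvac)) (hy.comp (Equiv.injective _))
      _ ≤ labelledDist x y := by norm_cast; omega
  · obtain ⟨j, -, hj⟩ : ∃ j ∈ univ, x j = y i := mem_image.mp (hyi ▸ hocc D hDm)
    calc (hcGraph L).edist (image x univ) (image y univ)
        = (hcGraph L).edist (image x univ) (image (y ∘ Equiv.swap i j) univ) := by
          rw [hswap_image]
      _ ≤ labelledDist x (y ∘ Equiv.swap i j) :=
          edist_le_labelledDist hNL x _ hx (hy.comp (Equiv.injective _))
      _ ≤ labelledDist x y := by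
          gcongr
          exact labelledDist_swap_le (by simp [hj])
termination_by (labelledDist x y, (mismatches x y).card)
decreasing_by
  · exact Prod.Lex.left _ _ hlt
  · exact Prod.Lex.right' _ (labelledDist_swap_le (by simp [hj]))
      (card_mismatches_swap_lt hy hi hj)

end LabelledDistance

section TrackedPaths

variable {L N k : ℕ} {u : ℕ → Finset (Fin L)} {c x : Finset (Fin L)}
  {ut : ℕ → Fin N → Fin L}

lemma IsPathN.card_eq [NeZero L] (hpath : IsPathN L u k c x) {l : ℕ} (hl : l ≤ k) :
    (u l).card = (u 0).card := by
  induction l with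
  | zero => rfl
  | succ l ih => exact ((hpath.2.2 l hl).1).symm.trans (ih (by omega))

lemma travel_eq_pathLength (j : Fin N) :
    travel ut k j = pathLength (fun l => ut l j) 0 k := by
  rw [travel, pathLength, range_eq_Ico]

namespace IsTracking

variable [NeZero L]

lemma mem (htr : IsTracking L N u k ut) {l : ℕ} (hl : l ≤ k) (j : Fin N) : ut l j ∈ u l := by
  rw [htr.2.1 l hl]
  exact mem_image_of_mem _ (mem_univ j)

lemma injective (htr : IsTracking L N u k ut) (hpath : IsPathN L u k c x) {l : ℕ} (hl : l ≤ k) :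
    Function.Injective (ut l) := by
  have hcard : (image (ut l) univ).card = (univ : Finset (Fin N)).card := by
    rw [← htr.2.1 l hl, hpath.card_eq hl, htr.2.1 0 (Nat.zero_le k),
      card_image_of_injective _ htr.1.injective]
  exact fun a b h => Finset.card_image_iff.mp hcard (by simp) (by simp) h

lemma notMem_of_ne (htr : IsTracking L N u k ut) {l : ℕ} (hl : l < k) {j : Fin N}
    (h : ut (l + 1) j ≠ ut l j) : ut (l + 1) j ∉ u l := by
  by_cases hstay : ut l j ∈ u (l + 1)
  · exact absurd ((htr.2.2 l hl j).1 hstay) h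
  · exact (mem_sdiff.mp ((htr.2.2 l hl j).2 hstay)).2

lemma exists_mover (htr : IsTracking L N u k ut) (hpath : IsPathN L u k c x) {l : ℕ}
    (hl : l < k) : ∃ jm, (∀ j ≠ jm, ut (l + 1) j = ut l j) ∧
      (ut (l + 1) jm = ut l jm + 1 ∨ ut (l + 1) jm = ut l jm - 1) := by
  obtain ⟨hcard, q, hsd⟩ := hpath.2.2 l hl
  obtain ⟨a, b, ha, hb, hab⟩ := exists_sdiff_eq_singleton_of_symmDiff_eq_pair hcard hsd
  have haA : a ∈ u l \ u (l + 1) := ha ▸ mem_singleton_self a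
  obtain ⟨jm, -, hjm⟩ := mem_image.mp (htr.2.1 l hl.le ▸ (mem_sdiff.mp haA).1)
  refine ⟨jm, fun j hj => (htr.2.2 l hl j).1 ?_, ?_⟩
  · by_contra hleave
    have : ut l j ∈ u l \ u (l + 1) := mem_sdiff.mpr ⟨htr.mem hl.le j, hleave⟩
    rw [ha, mem_singleton, ← hjm] at this
    exact hj (htr.injective hpath hl.le this)
  · have hmove : ut (l + 1) jm = b := by
      simpa [hb] using (htr.2.2 l hl jm).2 (hjm ▸ (mem_sdiff.mp haA).2)
    rw [hmove, hjm]
    have hab' : ({a, b} : Set (Fin L)) = {q, q + 1} := by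
      simpa using congrArg (fun s : Finset (Fin L) => (s : Set (Fin L))) hab
    rcases Set.pair_eq_pair_iff.mp hab' with ⟨rfl, rfl⟩ | ⟨rfl, rfl⟩
    · simp
    · right; ring

lemma step_eq (htr : IsTracking L N u k ut) (hpath : IsPathN L u k c x) {l : ℕ} (hl : l < k)
    (j : Fin N) :
    ut (l + 1) j = ut l j ∨ ut (l + 1) j = ut l j + 1 ∨ ut (l + 1) j = ut l j - 1 := by
  obtain ⟨jm, hstay, hmove⟩ := htr.exists_mover hpath hl
  rcases eq_or_ne j jm with rfl | hj
  · exact Or.inr hmove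
  · exact Or.inl (hstay j hj)

lemma sum_pathLength_le (htr : IsTracking L N u k ut) (hpath : IsPathN L u k c x) :
    ∑ j, pathLength (fun l => ut l j) 0 k ≤ k := by
  unfold pathLength
  rw [Finset.sum_comm]
  refine (Finset.sum_le_card_nsmul _ _ 1 fun l hl => ?_).trans (by simp)
  obtain ⟨jm, hstay, hmove⟩ := htr.exists_mover hpath (mem_Ico.mp hl).2
  rw [Finset.sum_eq_single jm (fun j _ hj => by simp [hstay j hj]) (by simp)]
  rcases hmove with h | h
  · simpa [h] using cycDist_add_mul_le (a := ut l jm) (Or.inl rfl) 1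
  · simpa [h, sub_eq_add_neg] using cycDist_add_mul_le (a := ut l jm) (Or.inr rfl) 1

end IsTracking

end TrackedPaths

section Geodesics

variable {L N k : ℕ} [NeZero L] {u : ℕ → Finset (Fin L)} {c x : Finset (Fin L)}
  {ut : ℕ → Fin N → Fin L}

def MovesGeodesically (ut : ℕ → Fin N → Fin L) (k : ℕ) : Prop :=
  ∀ j t, t ≤ k → pathLength (fun l => ut l j) 0 t = cycDist (ut 0 j) (ut t j)

/-- The path lengths of the particles add up to at most `k = dN L c x`, which is at most the
labelled distance between the endpoints, itself at most the sum of the path lengths: all these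
inequalities are equalities. -/
theorem IsTracking.movesGeodesically (htr : IsTracking L N u k ut) (hNL : N < L)
    (hk : k = dN L c x) (hpath : IsPathN L u k c x) : MovesGeodesically ut k := by
  have hbound : k ≤ labelledDist (ut 0) (ut k) := by
    refine hk.le.trans ?_
    rw [dN, SimpleGraph.dist, ← hpath.1, ← hpath.2.1, htr.2.1 0 (Nat.zero_le k),
      htr.2.1 k le_rfl]
    exact ENat.toNat_le_of_le_natCast (edist_le_labelledDist hNL _ _
      (htr.injective hpath (Nat.zero_le k)) (htr.injective hpath le_rfl))
  have hle : ∀ j ∈ univ, cycDist (ut 0 j) (ut k j) ≤ pathLength (fun l => ut l j) 0 k :=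
    fun j _ => cycDist_le_pathLength (fun l => ut l j) (Nat.zero_le k)
  have heq := (Finset.sum_eq_sum_iff_of_le hle).mp
    (le_antisymm (Finset.sum_le_sum hle) (hbound.trans' (htr.sum_pathLength_le hpath)))
  exact fun j t ht =>
    pathLength_eq_cycDist_of_le _ (Nat.zero_le t) ht (heq j (mem_univ j)).symm

lemma exists_isFirstMove_of_travel_ne_zero {j : Fin N} (h : travel ut k j ≠ 0) :
    ∃ T < k, IsFirstMove (fun l => ut l j) T := by
  refine exists_isFirstMove _ ?_
  by_contra! hstay
  refine h (Finset.sum_eq_zero fun l hl => ?_)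
  rw [mem_range] at hl
  rw [hstay l hl.le, hstay (l + 1) hl, cycDist_self]

lemma travel_ne_zero_of_isFirstMove {j : Fin N} {T : ℕ} (hT : T < k)
    (hfm : IsFirstMove (fun l => ut l j) T) : travel ut k j ≠ 0 := by
  have h1 := cycDist_le_pathLength (fun l => ut l j) (Nat.zero_le (T + 1))
  have h2 := pathLength_add (fun l => ut l j) (Nat.zero_le (T + 1)) hT
  have h3 : cycDist (ut 0 j) (ut (T + 1) j) ≠ 0 := mt cycDist_eq_zero_iff.mp (Ne.symm hfm.2)
  rw [travel_eq_pathLength]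
  omega

lemma MovesGeodesically.exists_visit_iff (hgeo : MovesGeodesically ut k) {j : Fin N} {T : ℕ}
    (hT : T < k) (hfm : IsFirstMove (fun l => ut l j) T) {s : Fin L} (hs : s = 1 ∨ s = -1) :
    (∃ l ≤ k, ut l j = ut 0 j + s) ↔ ut (T + 1) j = ut 0 j + s := by
  have hL : 2 ≤ L := Fin.nontrivial_iff_two_le.mp ⟨⟨_, _, hfm.2⟩⟩
  have hs0 : s ≠ 0 := by
    rcases hs with rfl | rfl
    all_goals simp; omega
  have hdist : cycDist (ut 0 j) (ut 0 j + s) = 1 := by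
    refine le_antisymm (by simpa using cycDist_add_mul_le (a := ut 0 j) hs 1) ?_
    exact Nat.one_le_iff_ne_zero.mpr (mt cycDist_eq_zero_iff.mp (by simpa [eq_comm] using hs0))
  constructor
  · rintro ⟨l, hl, hvisit⟩
    have hmoved : ut l j ≠ ut 0 j := by rw [hvisit]; simpa using hs0
    rw [← hvisit]
    exact (hfm.eq_of_pathLength_eq_one _ (by rw [hgeo j l hl, hvisit, hdist]) hmoved).symm
  · exact fun h => ⟨T + 1, hT, h⟩

lemma MovesGeodesically.iminus_iff (hgeo : MovesGeodesically ut k) {j : Fin N} {T : ℕ}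
    (hT : T < k) (hfm : IsFirstMove (fun l => ut l j) T) :
    Iminus ut k j ↔ ut (T + 1) j = ut 0 j - 1 := by
  simpa [Iminus, travel_ne_zero_of_isFirstMove hT hfm, sub_eq_add_neg] using
    hgeo.exists_visit_iff hT hfm (Or.inr rfl)

lemma MovesGeodesically.iplus_iff (hgeo : MovesGeodesically ut k) {j : Fin N} {T : ℕ}
    (hT : T < k) (hfm : IsFirstMove (fun l => ut l j) T) :
    Iplus ut k j ↔ ut (T + 1) j = ut 0 j + 1 := by
  simpa [Iplus, travel_ne_zero_of_isFirstMove hT hfm] using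
    hgeo.exists_visit_iff hT hfm (Or.inl rfl)

end Geodesics

section Directions

variable {L N k : ℕ} [NeZero L] {u : ℕ → Finset (Fin L)} {c x : Finset (Fin L)}
  {ut : ℕ → Fin N → Fin L}

lemma IsTracking.isFirstMove_step (htr : IsTracking L N u k ut) (hpath : IsPathN L u k c x)
    {j : Fin N} {T : ℕ} (hT : T < k) (hfm : IsFirstMove (fun l => ut l j) T) :
    ut (T + 1) j = ut 0 j + 1 ∨ ut (T + 1) j = ut 0 j - 1 := by
  have hstay : ut T j = ut 0 j := hfm.1 T le_rfl
  rw [← hstay]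
  exact (htr.step_eq hpath hT j).resolve_left (hstay ▸ hfm.2)

lemma IsTracking.exists_isFirstMove_of_step_onto (htr : IsTracking L N u k ut) {a b : Fin N}
    {Ta : ℕ} (hTa : Ta < k) (ha : IsFirstMove (fun l => ut l a) Ta)
    (hab : ut (Ta + 1) a = ut 0 b) :
    ∃ Tb < Ta, IsFirstMove (fun l => ut l b) Tb ∧ ut (Tb + 1) b ≠ ut 0 a := by
  have hastay : ∀ t ≤ Ta, ut t a = ut 0 a := ha.1
  have hvacant : ut 0 b ∉ u Ta :=
    hab ▸ htr.notMem_of_ne hTa (by rw [hastay Ta le_rfl]; exact ha.2)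
  obtain ⟨Tb, hTb, hb⟩ := exists_isFirstMove (fun l => ut l b)
    ⟨Ta, le_rfl, fun h => hvacant (h ▸ htr.mem hTa.le b)⟩
  have hbstay : ut Tb b = ut 0 b := hb.1 Tb le_rfl
  have hbvacant : ut (Tb + 1) b ∉ u Tb :=
    htr.notMem_of_ne (by omega) (by rw [hbstay]; exact hb.2)
  refine ⟨Tb, hTb, hb, fun h => hbvacant ?_⟩
  rw [h, ← hastay Tb hTb.le]
  exact htr.mem (by omega) a

lemma iminus_of_iminus_of_eq_add_one (hgeo : MovesGeodesically ut k)
    (htr : IsTracking L N u k ut) (hpath : IsPathN L u k c x) {i j : Fin N}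
    (hij : ut 0 i = ut 0 j + 1) (hi : Iminus ut k i) : Iminus ut k j := by
  obtain ⟨Ti, hTi, hfi⟩ := exists_isFirstMove_of_travel_ne_zero hi.1
  obtain ⟨Tj, hTj, hfj, hblocked⟩ := htr.exists_isFirstMove_of_step_onto (b := j) hTi hfi
    (by rw [(hgeo.iminus_iff hTi hfi).mp hi, hij]; ring)
  rw [hgeo.iminus_iff (by omega) hfj]
  exact (htr.isFirstMove_step hpath (by omega) hfj).resolve_left (hij ▸ hblocked)

lemma iplus_of_iplus_of_eq_add_one (hgeo : MovesGeodesically ut k)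
    (htr : IsTracking L N u k ut) (hpath : IsPathN L u k c x) {i j : Fin N}
    (hij : ut 0 i = ut 0 j + 1) (hj : Iplus ut k j) : Iplus ut k i := by
  obtain ⟨Tj, hTj, hfj⟩ := exists_isFirstMove_of_travel_ne_zero hj.1
  obtain ⟨Ti, hTi, hfi, hblocked⟩ := htr.exists_isFirstMove_of_step_onto (b := i) hTj hfj
    (by rw [(hgeo.iplus_iff hTj hfj).mp hj, hij])
  rw [hgeo.iplus_iff (by omega) hfi]
  exact (htr.isFirstMove_step hpath (by omega) hfi).resolve_right
    (by rw [hij, add_sub_cancel_right]; exact hblocked)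

lemma MovesGeodesically.not_iminus_and_iplus (hgeo : MovesGeodesically ut k) (hL : 3 ≤ L)
    (j : Fin N) : ¬ (Iminus ut k j ∧ Iplus ut k j) := by
  rintro ⟨hm, hp⟩
  obtain ⟨T, hT, hfm⟩ := exists_isFirstMove_of_travel_ne_zero hm.1
  exact add_one_ne_sub_one hL _
    (((hgeo.iplus_iff hT hfm).mp hp).symm.trans ((hgeo.iminus_iff hT hfm).mp hm))

end Directions

section Droplet

variable {L N : ℕ} [NeZero L]

lemma droplet_eq_image (m : Fin L) : droplet L N m =
    image (fun j : Fin N => m - (((N - 1) / 2 : ℕ) : Fin L) + (j : ℕ)) univ := by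
  ext z
  simp only [droplet, mem_image, mem_univ, true_and]
  constructor
  · rintro ⟨a, ha, rfl⟩
    obtain ⟨n, hn, rfl⟩ : ∃ n < N, (n : Fin L) = a := by simpa using ha
    exact ⟨⟨n, hn⟩, rfl⟩
  · rintro ⟨j, rfl⟩
    exact ⟨_, by simpa using ⟨j, j.isLt, rfl⟩, rfl⟩

lemma eq_add_one_of_droplet {g : Fin N → Fin L} (hg : StrictMono g)
    (hdrop : isDroplet L N (image g univ))
    (he : ¬ ({(0 : Fin L), ((L - 1 : ℕ) : Fin L)} : Finset (Fin L)) ⊆ image g univ)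
    {i j : Fin N} (hij : (i : ℕ) = j + 1) : g i = g j + 1 := by
  obtain ⟨m, hm⟩ := hdrop
  rw [droplet_eq_image] at hm
  set b := m - (((N - 1) / 2 : ℕ) : Fin L)
  have hwrap : b.val + N ≤ L := by
    by_contra hwrap
    refine he (insert_subset_iff.mpr ⟨?_, singleton_subset_iff.mpr ?_⟩) <;> rw [hm]
    · refine mem_image.mpr ⟨⟨L - b.val, by omega⟩, mem_univ _, ?_⟩
      simp [Nat.cast_sub b.isLt.le]
    · refine mem_image.mpr ⟨⟨L - 1 - b.val, by omega⟩, mem_univ _, ?_⟩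
      simp only
      rw [Nat.cast_sub (by omega), Fin.cast_val_eq_self]
      ring
  have hval : ∀ j : Fin N, (b + ((j : ℕ) : Fin L)).val = b.val + j := fun j => by
    have := j.isLt
    rw [Fin.val_add, Fin.val_natCast, Nat.mod_eq_of_lt (show (j : ℕ) < L by omega)]
    exact Nat.mod_eq_of_lt (by omega)
  have hmono : StrictMono fun j : Fin N => b + ((j : ℕ) : Fin L) := fun j j' h => by
    rw [Fin.lt_def, hval, hval]
    exact Nat.add_lt_add_left h _
  have hg' : g = fun j : Fin N => b + ((j : ℕ) : Fin L) := (hg.range_inj hmono).mp (by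
    simpa only [coe_image, coe_univ, Set.image_univ] using
      congrArg (fun s : Finset (Fin L) => (s : Set (Fin L))) hm)
  rw [hg']
  show b + ((i : ℕ) : Fin L) = b + ((j : ℕ) : Fin L) + 1
  rw [hij]
  push_cast
  ring

end Droplet

theorem direction_sets_ordered_general (L N : ℕ) [NeZero L] (hN : N < L)
    (c x : Finset (Fin L))
    (hdrop : isDroplet L N c)
    (he : ¬ ({(0 : Fin L), ((L - 1 : ℕ) : Fin L)} : Finset (Fin L)) ⊆ c)
    (k : ℕ) (hk : k = dN L c x)
    (u : ℕ → Finset (Fin L)) (hpath : IsPathN L u k c x)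
    (ut : ℕ → Fin N → Fin L) (htr : IsTracking L N u k ut) :
    (∀ i j : Fin N, Iminus ut k i → (I0 ut k j ∨ Iplus ut k j) → i ≤ j) ∧
    (∀ i j : Fin N, (Iminus ut k i ∨ I0 ut k i) → Iplus ut k j → i ≤ j) := by
  have hgeo := htr.movesGeodesically hN hk hpath
  have himage : image (ut 0) univ = c := (htr.2.1 0 (Nat.zero_le k)).symm.trans hpath.1
  have hsucc : ∀ i j : Fin N, (i : ℕ) = j + 1 → ut 0 i = ut 0 j + 1 := fun i j =>
    eq_add_one_of_droplet htr.1 (himage ▸ hdrop) (himage ▸ he)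
  have hminus : Antitone (Iminus ut k) := Fin.antitone_of_forall_eq_succ fun i j hij =>
    iminus_of_iminus_of_eq_add_one hgeo htr hpath (hsucc i j hij)
  have hplus : Monotone (Iplus ut k) := Fin.monotone_of_forall_eq_succ fun i j hij =>
    iplus_of_iplus_of_eq_add_one hgeo htr hpath (hsucc i j hij)
  have hL : ∀ i j : Fin N, j < i → 3 ≤ L := fun i j hji => by
    have := i.isLt; have : (j : ℕ) < i := hji; omega
  refine ⟨fun i j hi hj => le_of_not_gt fun hji => ?_,
    fun i j hi hj => le_of_not_gt fun hji => ?_⟩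
  · rcases hj with hj | hj
    · exact (hminus hji.le hi).1 hj
    · exact hgeo.not_iminus_and_iplus (hL i j hji) j ⟨hminus hji.le hi, hj⟩
  · rcases hi with hi | hi
    · exact hgeo.not_iminus_and_iplus (hL i j hji) i ⟨hi, hplus hji.le hj⟩
    · exact (hplus hji.le hj).1 hi

/-- Hard-core particle property (iii): along a shortest path from a droplet avoiding the edge
`{0, L-1}`, every counter-clockwise moving particle precedes every particle that does not move
counter-clockwise, i.e. `sup I_- ≤ inf (I_0 ∪ I_+)` and `sup (I_- ∪ I_0) ≤ inf I_+`. -/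
theorem direction_sets_ordered (L N : ℕ) [NeZero L] (hN : N < L)
    (c x : Finset (Fin L)) (hc : c.card = N) (hx : x.card = N)
    (hdrop : isDroplet L N c)
    (he : ¬ ({(0 : Fin L), ((L - 1 : ℕ) : Fin L)} : Finset (Fin L)) ⊆ c)
    (k : ℕ) (hk : k = dN L c x)
    (u : ℕ → Finset (Fin L)) (hpath : IsPathN L u k c x)
    (ut : ℕ → Fin N → Fin L) (htr : IsTracking L N u k ut) :
    (∀ i j : Fin N, Iminus ut k i → (I0 ut k j ∨ Iplus ut k j) → i ≤ j) ∧
    (∀ i j : Fin N, (Iminus ut k i ∨ I0 ut k i) → Iplus ut k j → i ≤ j) :=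
  direction_sets_ordered_general L N hN c x hdrop he k hk u hpath ut htr
end
end
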